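/- arXiv:1206.0992 — 4 statements merged into one kernel-verified Lean document; each statement's English description precedes it below -/
import Mathlib

section
/- Let n = 2^m with m ≥ 1 an integer. There exist indices i_0 ≠ j_0, …, i_{mn/2−1} ≠ j_{mn/2−1} in {1,…,n} such that the matrices P_k = M_{i_k j_k} ∈ 𝓜_n, k = 0,…,mn/2−1, satisfy P_{mn/2−1}⋯P_0 = (1/n)·1·1^T, where 1 is the all-ones column vector; that is, finite-time consensus is reached in exactly m·2^{m−1} gossip steps, i.e., m·n node updates. -/
open Matrix

/-- The symmetric gossip matrix `M_{ij} = I - (e_i - e_j)(e_i - e_j)^T / 2`. -/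
noncomputable def gossipM (n : ℕ) (i j : Fin n) : Matrix (Fin n) (Fin n) ℝ :=
  1 - (1 / 2 : ℝ) • vecMulVec (Pi.single i 1 - Pi.single j 1) (Pi.single i 1 - Pi.single j 1)

/-! Recursive doubling. If a schedule averages `α`, running it on both halves of `α ⊕ α` and
then gossiping each `inl a` with `inr a` averages `α ⊕ α`: once both halves are averaged, each
of these `card α` pairwise disjoint steps replaces two entries by the mean of the two half-means.
Starting from a single node, `2 ^ (m + 1)` nodes thus need `2 · m 2 ^ (m - 1) + 2 ^ m` steps,
which is `(m + 1) 2 ^ m`. -/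

variable {α β : Type*} [DecidableEq α] [DecidableEq β]

noncomputable def gossip (i j : α) : Matrix α α ℝ :=
  1 - (1 / 2 : ℝ) • vecMulVec (Pi.single i 1 - Pi.single j 1) (Pi.single i 1 - Pi.single j 1)

lemma gossip_equiv (e : α ≃ β) (i j : α) : gossip (e i) (e j) = reindex e e (gossip i j) := by
  ext a b
  simp [gossip, one_apply, Pi.single_apply, vecMulVec_apply, Equiv.symm_apply_eq]

lemma gossip_inl (i j : α) :
    gossip (Sum.inl i : α ⊕ β) (Sum.inl j) = fromBlocks (gossip i j) 0 0 1 := by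
  ext (a | a) (b | b) <;> simp [gossip, one_apply, Pi.single_apply, vecMulVec_apply]

lemma gossip_inr (i j : β) :
    gossip (Sum.inr i : α ⊕ β) (Sum.inr j) = fromBlocks 1 0 0 (gossip i j) := by
  ext (a | a) (b | b) <;> simp [gossip, one_apply, Pi.single_apply, vecMulVec_apply]

noncomputable def mixBlock (D : Matrix α α ℝ) : Matrix (α ⊕ α) (α ⊕ α) ℝ :=
  fromBlocks (1 - (1 / 2 : ℝ) • D) ((1 / 2 : ℝ) • D) ((1 / 2 : ℝ) • D) (1 - (1 / 2 : ℝ) • D)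

lemma gossip_inl_inr (a : α) :
    gossip (Sum.inl a : α ⊕ α) (Sum.inr a) = mixBlock (single a a 1) := by
  ext (x | x) (y | y) <;>
    simp [gossip, mixBlock, one_apply, Pi.single_apply, vecMulVec_apply, single_apply] <;>
    split_ifs <;> grind

section Fintype

variable [Fintype α] [Fintype β]

lemma mixBlock_mul_mixBlock {E D : Matrix α α ℝ} (h : E * D = 0) :
    mixBlock E * mixBlock D = mixBlock (E + D) := by
  simp only [mixBlock, fromBlocks_multiply, sub_mul, mul_sub, smul_mul_smul_comm, h, one_mul,
    mul_one, smul_zero, smul_add]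
  congr 1 <;> module

lemma prod_map_mixBlock {ι : Type*} (D : ι → Matrix α α ℝ) {S : List ι}
    (h : S.Pairwise fun a b => D a * D b = 0) :
    (S.map fun a => mixBlock (D a)).prod = mixBlock (S.map D).sum := by
  induction S with
  | nil => simp [mixBlock, fromBlocks_one]
  | cons a S ih =>
    rw [List.pairwise_cons] at h
    have hD : D a * (S.map D).sum = 0 := by
      rw [← List.sum_map_mul_left]
      exact List.sum_eq_zero fun _ hE => by
        obtain ⟨b, hb, rfl⟩ := List.mem_map.mp hE
        exact h.1 b hb
    rw [List.map_cons, List.prod_cons, ih h.2, List.map_cons, List.sum_cons,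
      mixBlock_mul_mixBlock hD]

-- The head of the list is the last gossip step: the product is taken in list order.
noncomputable def gossipProd (L : List (α × α)) : Matrix α α ℝ :=
  (L.map fun p => gossip p.1 p.2).prod

@[simp]
lemma gossipProd_nil : gossipProd ([] : List (α × α)) = 1 := rfl

@[simp]
lemma gossipProd_cons (p : α × α) (L : List (α × α)) :
    gossipProd (p :: L) = gossip p.1 p.2 * gossipProd L := rfl

@[simp]
lemma gossipProd_append (L₁ L₂ : List (α × α)) :
    gossipProd (L₁ ++ L₂) = gossipProd L₁ * gossipProd L₂ := by
  simp [gossipProd]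

lemma gossipProd_map_equiv (e : α ≃ β) (L : List (α × α)) :
    gossipProd (L.map (Prod.map e e)) = reindex e e (gossipProd L) := by
  induction L with
  | nil => simp
  | cons p L ih => simp [ih, gossip_equiv, submatrix_mul_equiv]

lemma gossipProd_map_inl (L : List (α × α)) :
    gossipProd (L.map (Prod.map Sum.inl Sum.inl) : List ((α ⊕ β) × (α ⊕ β)))
      = fromBlocks (gossipProd L) 0 0 1 := by
  induction L with
  | nil => simp [fromBlocks_one]
  | cons p L ih => simp [ih, gossip_inl, fromBlocks_multiply]

lemma gossipProd_map_inr (L : List (β × β)) :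
    gossipProd (L.map (Prod.map Sum.inr Sum.inr) : List ((α ⊕ β) × (α ⊕ β)))
      = fromBlocks 1 0 0 (gossipProd L) := by
  induction L with
  | nil => simp [fromBlocks_one]
  | cons p L ih => simp [ih, gossip_inr, fromBlocks_multiply]

variable (α) in
noncomputable def pairing : List ((α ⊕ α) × (α ⊕ α)) :=
  Finset.univ.toList.map fun a => (Sum.inl a, Sum.inr a)

lemma gossipProd_pairing : gossipProd (pairing α) = mixBlock 1 := by
  have hD : (Finset.univ.toList : List α).Pairwise
      fun a b => single a a (1 : ℝ) * single b b 1 = 0 :=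
    (Finset.nodup_toList _).imp fun hab => single_mul_single_of_ne _ _ _ _ hab _
  simp only [gossipProd, pairing, List.map_map, Function.comp_def, gossip_inl_inr,
    prod_map_mixBlock _ hD, Finset.sum_map_toList, sum_single_one]

variable (α) in
noncomputable def consensus : Matrix α α ℝ := of fun _ _ => (Fintype.card α : ℝ)⁻¹

omit [DecidableEq α] [DecidableEq β] in
lemma reindex_consensus (e : α ≃ β) :
    reindex e e (consensus α) = consensus β := by
  ext
  simp [consensus, Fintype.card_congr e]

lemma consensus_eq_one [Subsingleton α] : consensus α = 1 := by
  ext a b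
  obtain rfl := Subsingleton.elim a b
  have : Fintype.card α = 1 := Fintype.card_eq_one_iff.mpr ⟨a, fun b => Subsingleton.elim b a⟩
  simp [consensus, this]

lemma mixBlock_one_mul_fromBlocks_consensus :
    mixBlock 1 * fromBlocks (consensus α) 0 0 1 * fromBlocks 1 0 0 (consensus α)
      = consensus (α ⊕ α) := by
  have half : (1 : Matrix α α ℝ) - (1 / 2 : ℝ) • 1 = (1 / 2 : ℝ) • 1 := by module
  rw [mixBlock, half]
  ext (a | a) (b | b) <;> simp [consensus, fromBlocks_multiply] <;> ring

def ReachesConsensus (L : List (α × α)) : Prop :=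
  (∀ p ∈ L, p.1 ≠ p.2) ∧ gossipProd L = consensus α

lemma reachesConsensus_nil [Subsingleton α] : ReachesConsensus ([] : List (α × α)) :=
  ⟨by simp, by simp [consensus_eq_one]⟩

lemma ReachesConsensus.map_equiv {L : List (α × α)} (h : ReachesConsensus L) (e : α ≃ β) :
    ReachesConsensus (L.map (Prod.map e e)) := by
  refine ⟨?_, by rw [gossipProd_map_equiv, h.2, reindex_consensus]⟩
  rw [List.forall_mem_map]
  exact fun p hp => e.injective.ne (h.1 p hp)

lemma ReachesConsensus.double {L : List (α × α)} (h : ReachesConsensus L) :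
    ReachesConsensus
      (pairing α ++ L.map (Prod.map Sum.inl Sum.inl) ++ L.map (Prod.map Sum.inr Sum.inr)) := by
  refine ⟨?_, ?_⟩
  · intro p hp
    simp only [pairing, List.mem_append, List.mem_map] at hp
    rcases hp with (⟨a, -, rfl⟩ | ⟨q, hq, rfl⟩) | ⟨q, hq, rfl⟩
    · exact Sum.inl_ne_inr
    · exact Sum.inl_injective.ne (h.1 q hq)
    · exact Sum.inr_injective.ne (h.1 q hq)
  · rw [gossipProd_append, gossipProd_append, gossipProd_pairing, gossipProd_map_inl,
      gossipProd_map_inr, h.2, mixBlock_one_mul_fromBlocks_consensus]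

end Fintype

lemma exists_reachesConsensus_fin_two_pow (m : ℕ) :
    ∃ L : List (Fin (2 ^ m) × Fin (2 ^ m)), L.length = m * 2 ^ (m - 1) ∧ ReachesConsensus L := by
  induction m with
  | zero =>
    have : Subsingleton (Fin (2 ^ 0)) := Fin.subsingleton_iff_le_one.mpr (by norm_num)
    exact ⟨[], rfl, reachesConsensus_nil⟩
  | succ m ih =>
    obtain ⟨L, hlen, hL⟩ := ih
    refine ⟨_, ?_, hL.double.map_equiv (finSumFinEquiv.trans (finCongr (Nat.two_pow_succ m).symm))⟩
    rcases m with _ | m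
    · simp [pairing, hlen]
    · simp [pairing, hlen, pow_succ]
      ring

lemma exists_ofFn_eq {γ : Type*} {L : List γ} {N : ℕ} (h : L.length = N) :
    ∃ f : Fin N → γ, List.ofFn f = L := by
  subst h
  exact ⟨L.get, List.ofFn_get L⟩

theorem stmt_3_general (m n : ℕ) (hn : n = 2 ^ m) :
    ∃ i j : Fin (m * 2 ^ (m - 1)) → Fin n,
      (∀ k, i k ≠ j k) ∧
      (List.ofFn (fun k => gossipM n (i k) (j k))).reverse.prod
        = Matrix.of fun _ _ => (1 / (n : ℝ)) := by
  subst hn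
  obtain ⟨L, hlen, hdistinct, hprod⟩ := exists_reachesConsensus_fin_two_pow m
  obtain ⟨f, hf⟩ := exists_ofFn_eq ((List.length_reverse).trans hlen)
  refine ⟨fun k => (f k).1, fun k => (f k).2,
    fun k => hdistinct (f k) (List.mem_reverse.mp (hf ▸ List.mem_ofFn.mpr ⟨k, rfl⟩)), ?_⟩
  have hsteps : List.ofFn (fun k => gossipM (2 ^ m) (f k).1 (f k).2)
      = L.reverse.map fun p => gossip p.1 p.2 := by
    rw [← hf, List.map_ofFn]
    rfl
  rw [hsteps, ← List.map_reverse, List.reverse_reverse]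
  simpa [gossipProd, consensus] using hprod

theorem stmt_3 (m n : ℕ) (hm : 1 ≤ m) (hn : n = 2 ^ m) :
    ∃ i j : Fin (m * 2 ^ (m - 1)) → Fin n,
      (∀ k, i k ≠ j k) ∧
      (List.ofFn (fun k => gossipM n (i k) (j k))).reverse.prod
        = Matrix.of fun _ _ => (1 / (n : ℝ)) :=
  stmt_3_general m n hn
end

section
/- Let n = 4 and suppose P_0, P_1, P_2, … is a sequence of matrices of the form M_{ij} with i ≠ j in {1,2,3,4} such that P_k ≠ P_{k+1} for all k ≥ 0. Set Ψ_h = P_{h−1}⋯P_0 for h ≥ 1. Then there is no h ≥ 1 for which Ψ_h simultaneously has exactly two distinct rows and three of its four rows equal to each other (i.e., no Ψ_h has a row-value pattern in which one row vector occurs three times and another occurs once). -/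
/-!
Every gossip matrix is doubly stochastic, so `Ψ = Ψ_h` maps the sum-zero hyperplane `V` into
itself, and if rows `a, b, c` of `Ψ` agree while row `d` differs, then `Ψ V` is a nonzero
subspace of the line through the vector that is `-3` at `d` and `1` elsewhere.

On the other hand, `Ψ_{h+1} V = P_h (Ψ_h V)` is always either `V`, a plane
`{x ∈ V | x i = x j}`, or contained in a line spanned by a vector with entries `a, a, b, -2a-b`
(in some order) where `b / a` is `-1`, `∞` or twice a rational with odd denominator: averaging two
coordinates preserves this 2-adic condition, and it forbids three equal coordinates.
-/

open Matrix

section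

variable {n : ℕ} {i j m : Fin n} {x : Fin n → ℝ}

lemma gossipM_mulVec (i j : Fin n) (x : Fin n → ℝ) :
    gossipM n i j *ᵥ x = x - ((x i - x j) / 2) • (Pi.single i 1 - Pi.single j 1) := by
  rw [gossipM, sub_mulVec, one_mulVec, smul_mulVec, vecMulVec_mulVec]
  ext m
  simp [sub_dotProduct]
  ring

lemma gossipM_comm (i j : Fin n) : gossipM n i j = gossipM n j i := by
  unfold gossipM
  rw [← neg_sub (Pi.single j 1), neg_vecMulVec, vecMulVec_neg, neg_neg]

lemma gossipM_transpose (i j : Fin n) : (gossipM n i j)ᵀ = gossipM n i j := by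
  simp [gossipM, transpose_vecMulVec]

lemma gossipM_mulVec_of_eq (h : x i = x j) : gossipM n i j *ᵥ x = x := by
  simp [gossipM_mulVec, h]

lemma gossipM_mulVec_apply_left (hij : i ≠ j) : (gossipM n i j *ᵥ x) i = (x i + x j) / 2 := by
  simp [gossipM_mulVec, hij]
  ring

lemma gossipM_mulVec_apply_right (hij : i ≠ j) : (gossipM n i j *ᵥ x) j = (x i + x j) / 2 := by
  rw [gossipM_comm, gossipM_mulVec_apply_left hij.symm, add_comm]

lemma gossipM_mulVec_apply_of_ne (hi : m ≠ i) (hj : m ≠ j) : (gossipM n i j *ᵥ x) m = x m := by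
  simp [gossipM_mulVec, hi, hj]

lemma gossipM_mulVec_single_sub_single (hij : i ≠ j) :
    gossipM n i j *ᵥ (Pi.single i 1 - Pi.single j 1) = 0 := by
  rw [gossipM_mulVec]
  simp [hij, hij.symm]

lemma gossipM_mem_doublyStochastic (i j : Fin n) : gossipM n i j ∈ doublyStochastic ℝ (Fin n) := by
  have hone : gossipM n i j *ᵥ 1 = 1 := gossipM_mulVec_of_eq rfl
  refine mem_doublyStochastic.2 ⟨fun a b => ?_, hone, ?_⟩
  · simp only [gossipM, Matrix.sub_apply, Matrix.smul_apply, vecMulVec_apply, one_apply,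
      Pi.sub_apply, Pi.single_apply, smul_eq_mul]
    split_ifs <;> subst_vars <;> norm_num at *
  · rw [← gossipM_transpose, vecMul_transpose, hone]

def sumZero (n : ℕ) : Submodule ℝ (Fin n → ℝ) where
  carrier := {x | ∑ m, x m = 0}
  add_mem' hx hy := by simp_all [Finset.sum_add_distrib]
  zero_mem' := by simp
  smul_mem' c x hx := by simp_all [← Finset.mul_sum]

def sumZeroEq (i j : Fin n) : Submodule ℝ (Fin n → ℝ) :=
  sumZero n ⊓ LinearMap.ker (LinearMap.proj (R := ℝ) (φ := fun _ : Fin n => ℝ) i - LinearMap.proj j)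

lemma mem_sumZero : x ∈ sumZero n ↔ ∑ m, x m = 0 := Iff.rfl

lemma mem_sumZeroEq : x ∈ sumZeroEq i j ↔ x ∈ sumZero n ∧ x i = x j := by
  simp [sumZeroEq, sub_eq_zero]

lemma sumZeroEq_comm (i j : Fin n) : sumZeroEq i j = sumZeroEq j i := by
  ext x
  simp only [mem_sumZeroEq, eq_comm]

lemma mulVec_mem_sumZero {M : Matrix (Fin n) (Fin n) ℝ} (hM : M ∈ doublyStochastic ℝ (Fin n))
    (hx : x ∈ sumZero n) : M *ᵥ x ∈ sumZero n := by
  rwa [mem_sumZero, sum_mulVec_of_mem_doublyStochastic hM]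

lemma map_gossipM_le_sumZeroEq (hij : i ≠ j) {W : Submodule ℝ (Fin n → ℝ)} (hW : W ≤ sumZero n) :
    W.map (gossipM n i j).mulVecLin ≤ sumZeroEq i j := by
  rintro _ ⟨v, hv, rfl⟩
  exact mem_sumZeroEq.2 ⟨mulVec_mem_sumZero (gossipM_mem_doublyStochastic i j) (hW hv),
    by simp [gossipM_mulVec_apply_left hij, gossipM_mulVec_apply_right hij]⟩

lemma map_sumZero_gossipM (hij : i ≠ j) :
    (sumZero n).map (gossipM n i j).mulVecLin = sumZeroEq i j :=
  le_antisymm (map_gossipM_le_sumZeroEq hij le_rfl) fun w hw =>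
    ⟨w, (mem_sumZeroEq.1 hw).1, gossipM_mulVec_of_eq (mem_sumZeroEq.1 hw).2⟩

lemma map_sumZeroEq_gossipM {q : Fin n} (hiq : i ≠ q) (hij : i ≠ j) :
    (sumZeroEq i j).map (gossipM n i q).mulVecLin = sumZeroEq i q := by
  refine le_antisymm (map_gossipM_le_sumZeroEq hiq fun _ hv => (mem_sumZeroEq.1 hv).1)
    fun w hw => ?_
  obtain ⟨hw0, hwiq⟩ := mem_sumZeroEq.1 hw
  -- `gossipM n i q` fixes `w` and kills `eᵢ - e_q`; the shift makes coordinates `i` and `j` agree.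
  refine ⟨w + (w j - w i) • (Pi.single i 1 - Pi.single q 1), mem_sumZeroEq.2 ⟨?_, ?_⟩, ?_⟩
  · refine add_mem hw0 (Submodule.smul_mem _ _ ?_)
    simp [mem_sumZero, Finset.sum_sub_distrib]
  · by_cases hjq : j = q
    · subst hjq
      simp [hwiq]
    · simp [hij.symm, hjq, hiq]
  · simp [mulVec_add, mulVec_smul, gossipM_mulVec_single_sub_single hiq,
      gossipM_mulVec_of_eq hwiq]

lemma map_sumZero_ne_bot {M : Matrix (Fin n) (Fin n) ℝ} (hM : M ∈ doublyStochastic ℝ (Fin n))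
    {a d : Fin n} (had : M a ≠ M d) :
    (sumZero n).map M.mulVecLin ≠ ⊥ := by
  set u := M a - M d
  have hu : u ∈ sumZero n := by
    simp [u, mem_sumZero, Finset.sum_sub_distrib, sum_row_of_mem_doublyStochastic hM]
  have hMu : (M *ᵥ u) a - (M *ᵥ u) d = u ⬝ᵥ u := (sub_dotProduct _ _ _).symm
  refine (Submodule.ne_bot_iff _).2 ⟨M *ᵥ u, ⟨u, hu, rfl⟩, fun h0 => ?_⟩
  exact sub_ne_zero.2 had (dotProduct_self_eq_zero.1 (by rw [← hMu, h0]; simp))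

end

section Four

variable {i j k l : Fin 4}

lemma fin_four_cover : ∀ i j k l m : Fin 4, i ≠ j → i ≠ k → i ≠ l → j ≠ k → j ≠ l → k ≠ l →
    m = i ∨ m = j ∨ m = k ∨ m = l := by
  decide

lemma exists_fourth : ∀ i j k : Fin 4, i ≠ j → i ≠ k → j ≠ k → ∃ l, i ≠ l ∧ j ≠ l ∧ k ≠ l := by
  decide

lemma exists_two_others : ∀ i j : Fin 4, i ≠ j → ∃ k l, i ≠ k ∧ i ≠ l ∧ j ≠ k ∧ j ≠ l ∧ k ≠ l := by
  decide

lemma sum_fin_four_of_distinct (hij : i ≠ j) (hik : i ≠ k) (hil : i ≠ l) (hjk : j ≠ k)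
    (hjl : j ≠ l) (hkl : k ≠ l) (f : Fin 4 → ℝ) : ∑ m, f m = f i + f j + f k + f l := by
  have huniv : (Finset.univ : Finset (Fin 4)) = {i, j, k, l} := by
    refine (Finset.eq_univ_of_forall fun m => ?_).symm
    rcases fin_four_cover i j k l m hij hik hil hjk hjl hkl with rfl | rfl | rfl | rfl <;> simp
  rw [huniv, Finset.sum_insert (by simp [hij, hik, hil]), Finset.sum_insert (by simp [hjk, hjl]),
    Finset.sum_pair hkl, add_assoc, add_assoc]

/-- The ratio `b / a` is `-1`, `∞`, or twice a rational with odd denominator. -/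
def GoodRatio (a b : ℝ) : Prop :=
  b = -a ∨ a = 0 ∨ ∃ m n : ℤ, Odd n ∧ n * b = 2 * m * a

lemma GoodRatio.swap {a b : ℝ} (h : GoodRatio a b) : GoodRatio a (-2 * a - b) := by
  rcases h with rfl | rfl | ⟨m, n, hn, h⟩
  · left; ring
  · exact .inr (.inl rfl)
  · exact .inr (.inr ⟨-n - m, n, hn, by push_cast; linear_combination -h⟩)

lemma GoodRatio.avg {a b : ℝ} (h : GoodRatio a b) : GoodRatio ((a + b) / 2) a := by
  rcases h with rfl | rfl | ⟨m, n, hn, h⟩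
  · exact .inr (.inl (by ring))
  · exact .inr (.inr ⟨0, 1, odd_one, by simp⟩)
  · refine .inr (.inr ⟨n, n + 2 * m, hn.add_even (even_two_mul m), ?_⟩)
    push_cast
    linear_combination -h

lemma GoodRatio.eq_zero {a b : ℝ} (h : GoodRatio a b) (hb : b = a ∨ b = -3 * a) : a = 0 := by
  rcases h with h | h | ⟨m, n, hn, h⟩
  · rcases hb with rfl | rfl <;> linarith
  · exact h
  · have hodd : ((n - 2 * m : ℤ) : ℝ) ≠ 0 ∧ ((3 * n + 2 * m : ℤ) : ℝ) ≠ 0 := by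
      obtain ⟨r, rfl⟩ := hn
      constructor <;> exact_mod_cast (by omega)
    rcases hb with rfl | rfl
    · exact (mul_eq_zero.1 (by push_cast; linear_combination h)).resolve_left hodd.1
    · exact (mul_eq_zero.1 (by push_cast; linear_combination -h)).resolve_left hodd.2

def lineVec (i j k : Fin 4) (a b : ℝ) : Fin 4 → ℝ :=
  fun m => if m = i ∨ m = j then a else if m = k then b else -2 * a - b

lemma lineVec_comm (i j k : Fin 4) (a b : ℝ) : lineVec i j k a b = lineVec j i k a b := by
  ext m
  simp only [lineVec, or_comm (a := m = i)]

lemma lineVec_swap (hij : i ≠ j) (hik : i ≠ k) (hil : i ≠ l) (hjk : j ≠ k) (hjl : j ≠ l)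
    (hkl : k ≠ l) (a b : ℝ) : lineVec i j k a b = lineVec i j l a (-2 * a - b) := by
  ext m
  rcases fin_four_cover i j k l m hij hik hil hjk hjl hkl with rfl | rfl | rfl | rfl <;>
    simp [lineVec, hij, hkl, hik.symm, hil.symm, hjk.symm, hjl.symm, hkl.symm]

lemma gossipM_mulVec_lineVec_cross (hij : i ≠ j) (hik : i ≠ k) (hil : i ≠ l) (hjk : j ≠ k)
    (hjl : j ≠ l) (hkl : k ≠ l) (a b : ℝ) :
    gossipM 4 i k *ᵥ lineVec i j k a b = lineVec i k j ((a + b) / 2) a := by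
  ext m
  rcases fin_four_cover i j k l m hij hik hil hjk hjl hkl with rfl | rfl | rfl | rfl <;>
    simp [gossipM_mulVec, lineVec, hij, hik, hjk, hij.symm,
      hik.symm, hil.symm, hjk.symm, hjl.symm, hkl.symm] <;> ring

lemma gossipM_mulVec_lineVec_last (hij : i ≠ j) (hik : i ≠ k) (hil : i ≠ l) (hjk : j ≠ k)
    (hjl : j ≠ l) (hkl : k ≠ l) (a b : ℝ) :
    gossipM 4 k l *ᵥ lineVec i j k a b = lineVec i j k a (-a) := by
  ext m
  rcases fin_four_cover i j k l m hij hik hil hjk hjl hkl with rfl | rfl | rfl | rfl <;>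
    simp [gossipM_mulVec, lineVec, hij, hik, hil, hjk, hjl, hkl, hij.symm,
      hik.symm, hil.symm, hjk.symm, hjl.symm, hkl.symm] <;> ring

def IsGossipLine (x : Fin 4 → ℝ) : Prop :=
  ∃ i j k : Fin 4, i ≠ j ∧ i ≠ k ∧ j ≠ k ∧ ∃ a b, GoodRatio a b ∧ x = lineVec i j k a b

lemma isGossipLine_lineVec (hij : i ≠ j) (hik : i ≠ k) (hjk : j ≠ k) {a b : ℝ}
    (hab : GoodRatio a b) : IsGossipLine (lineVec i j k a b) :=
  ⟨i, j, k, hij, hik, hjk, a, b, hab, rfl⟩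

lemma isGossipLine_gossipM_mulVec_lineVec_cross (hij : i ≠ j) (hik : i ≠ k) (hil : i ≠ l)
    (hjk : j ≠ k) (hjl : j ≠ l) (hkl : k ≠ l) {a b : ℝ} (hab : GoodRatio a b) {p q : Fin 4}
    (hp : p = i ∨ p = j) (hq : q = k ∨ q = l) :
    IsGossipLine (gossipM 4 p q *ᵥ lineVec i j k a b) := by
  rcases hp with rfl | rfl <;> rcases hq with rfl | rfl
  · rw [gossipM_mulVec_lineVec_cross hij hik hil hjk hjl hkl]
    exact isGossipLine_lineVec hik hij hjk.symm hab.avg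
  · rw [lineVec_swap hij hik hil hjk hjl hkl,
      gossipM_mulVec_lineVec_cross hij hil hik hjl hjk hkl.symm]
    exact isGossipLine_lineVec hil hij hjl.symm hab.swap.avg
  · rw [lineVec_comm, gossipM_mulVec_lineVec_cross hij.symm hjk hjl hik hil hkl]
    exact isGossipLine_lineVec hjk hij.symm hik.symm hab.avg
  · rw [lineVec_comm, lineVec_swap hij.symm hjk hjl hik hil hkl,
      gossipM_mulVec_lineVec_cross hij.symm hjl hjk hil hik hkl.symm]
    exact isGossipLine_lineVec hjl hij.symm hil.symm hab.swap.avg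

lemma IsGossipLine.gossipM_mulVec {x : Fin 4 → ℝ} (hx : IsGossipLine x) (p q : Fin 4) :
    IsGossipLine (gossipM 4 p q *ᵥ x) := by
  obtain ⟨i, j, k, hij, hik, hjk, a, b, hab, rfl⟩ := hx
  obtain ⟨l, hil, hjl, hkl⟩ := exists_fourth i j k hij hik hjk
  have fixed : ∀ {p q}, lineVec i j k a b p = lineVec i j k a b q →
      IsGossipLine (gossipM 4 p q *ᵥ lineVec i j k a b) := fun h => by
    rw [gossipM_mulVec_of_eq h]
    exact isGossipLine_lineVec hij hik hjk hab
  have cross : ∀ {p q}, (p = i ∨ p = j) → (q = k ∨ q = l) →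
      IsGossipLine (gossipM 4 p q *ᵥ lineVec i j k a b) :=
    isGossipLine_gossipM_mulVec_lineVec_cross hij hik hil hjk hjl hkl hab
  have last : IsGossipLine (gossipM 4 k l *ᵥ lineVec i j k a b) := by
    rw [gossipM_mulVec_lineVec_last hij hik hil hjk hjl hkl]
    exact isGossipLine_lineVec hij hik hjk (.inl rfl)
  have hp := fin_four_cover i j k l p hij hik hil hjk hjl hkl
  have hq := fin_four_cover i j k l q hij hik hil hjk hjl hkl
  rcases hp with rfl | rfl | rfl | rfl <;> rcases hq with rfl | rfl | rfl | rfl <;>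
    first
    | (apply fixed; simp [lineVec]; done)
    | (apply cross <;> simp)
    | (rw [gossipM_comm]; apply cross <;> simp)
    | exact last
    | (rw [gossipM_comm]; exact last)

def spike (d : Fin 4) : Fin 4 → ℝ := fun m => if m = d then -3 else 1

lemma IsGossipLine.eq_zero_of_eq_smul_spike {x : Fin 4 → ℝ} (hx : IsGossipLine x) {μ : ℝ}
    {d : Fin 4} (hxd : x = μ • spike d) : μ = 0 := by
  obtain ⟨i, j, k, hij, hik, hjk, a, b, hab, rfl⟩ := hx
  obtain ⟨l, hil, hjl, hkl⟩ := exists_fourth i j k hij hik hjk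
  have hi := congrFun hxd i
  have hj := congrFun hxd j
  have hk := congrFun hxd k
  have hl := congrFun hxd l
  -- `d ∈ {i, j}` would make the equal entries `μ` and `-3μ`; otherwise `(a, b)` is `(μ, -3μ)` or
  -- `(μ, μ)`.
  rcases fin_four_cover i j k l d hij hik hil hjk hjl hkl with rfl | rfl | rfl | rfl <;>
    simp [lineVec, spike, hij, hik, hil, hjk, hjl, hkl, hij.symm, hik.symm, hil.symm, hjk.symm,
      hjl.symm, hkl.symm] at hi hj hk hl
  · linarith
  · linarith
  · linarith [hab.eq_zero (.inr (by linarith))]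
  · linarith [hab.eq_zero (.inl (by linarith))]

open Submodule in
def IsReachable (W : Submodule ℝ (Fin 4 → ℝ)) : Prop :=
  W = sumZero 4 ∨ (∃ i j, i ≠ j ∧ W = sumZeroEq i j) ∨ ∃ x, IsGossipLine x ∧ W ≤ span ℝ {x}

lemma map_sumZeroEq_gossipM_le_span (hij : i ≠ j) (hik : i ≠ k) (hil : i ≠ l) (hjk : j ≠ k)
    (hjl : j ≠ l) (hkl : k ≠ l) :
    (sumZeroEq i j).map (gossipM 4 k l).mulVecLin ≤ Submodule.span ℝ {lineVec i j k 1 (-1)} := by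
  rintro _ ⟨w, hw, rfl⟩
  obtain ⟨hw0, hwij⟩ := mem_sumZeroEq.1 hw
  rw [mem_sumZero, sum_fin_four_of_distinct hij hik hil hjk hjl hkl] at hw0
  refine Submodule.mem_span_singleton.2 ⟨w i, ?_⟩
  ext m
  rcases fin_four_cover i j k l m hij hik hil hjk hjl hkl with rfl | rfl | rfl | rfl
  · simp [lineVec, gossipM_mulVec_apply_of_ne hik hil]
  · simp [lineVec, gossipM_mulVec_apply_of_ne hjk hjl, hwij]
  · simp [lineVec, gossipM_mulVec_apply_left hkl, hik.symm, hjk.symm]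
    linarith
  · simp [lineVec, gossipM_mulVec_apply_right hkl, hil.symm, hjl.symm, hkl.symm]
    linarith

lemma IsReachable.map_gossipM {W : Submodule ℝ (Fin 4 → ℝ)} (hW : IsReachable W) {p q : Fin 4}
    (hpq : p ≠ q) : IsReachable (W.map (gossipM 4 p q).mulVecLin) := by
  rcases hW with rfl | ⟨i, j, hij, rfl⟩ | ⟨x, hx, hWx⟩
  · exact .inr (.inl ⟨p, q, hpq, map_sumZero_gossipM hpq⟩)
  · by_cases hpi : p = i ∨ p = j
    · rcases hpi with rfl | rfl
      · exact .inr (.inl ⟨p, q, hpq, map_sumZeroEq_gossipM hpq hij⟩)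
      · rw [sumZeroEq_comm]
        exact .inr (.inl ⟨p, q, hpq, map_sumZeroEq_gossipM hpq hij.symm⟩)
    by_cases hqi : q = i ∨ q = j
    · rw [gossipM_comm]
      rcases hqi with rfl | rfl
      · exact .inr (.inl ⟨q, p, hpq.symm, map_sumZeroEq_gossipM hpq.symm hij⟩)
      · rw [sumZeroEq_comm]
        exact .inr (.inl ⟨q, p, hpq.symm, map_sumZeroEq_gossipM hpq.symm hij.symm⟩)
    rw [not_or] at hpi hqi
    exact .inr (.inr ⟨_, ⟨i, j, p, hij, Ne.symm hpi.1, Ne.symm hpi.2, 1, -1, .inl rfl, rfl⟩,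
      map_sumZeroEq_gossipM_le_span hij (Ne.symm hpi.1) (Ne.symm hqi.1) (Ne.symm hpi.2)
        (Ne.symm hqi.2) hpq⟩)
  · refine .inr (.inr ⟨_, hx.gossipM_mulVec p q, ?_⟩)
    calc W.map (gossipM 4 p q).mulVecLin
        ≤ (Submodule.span ℝ {x}).map (gossipM 4 p q).mulVecLin := Submodule.map_mono hWx
      _ = Submodule.span ℝ {gossipM 4 p q *ᵥ x} := by
        rw [Submodule.map_span, Set.image_singleton, mulVecLin_apply]

lemma isReachable_map_prod (L : List (Matrix (Fin 4) (Fin 4) ℝ))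
    (hL : ∀ M ∈ L, ∃ i j, i ≠ j ∧ M = gossipM 4 i j) :
    IsReachable ((sumZero 4).map L.prod.mulVecLin) := by
  induction L with
  | nil => exact .inl (by simp)
  | cons M L ih =>
    obtain ⟨i, j, hij, rfl⟩ := hL M List.mem_cons_self
    rw [List.prod_cons, mulVecLin_mul, Submodule.map_comp]
    exact (ih fun N hN => hL N (List.mem_cons_of_mem _ hN)).map_gossipM hij

lemma single_sub_single_not_mem_span_spike (hkl : k ≠ l) (hik : i ≠ k) (hil : i ≠ l) (d : Fin 4) :
    Pi.single k 1 - Pi.single l 1 ∉ Submodule.span ℝ {spike d} := by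
  intro h
  obtain ⟨μ, hμ⟩ := Submodule.mem_span_singleton.1 h
  have hi := congrFun hμ i
  have hk := congrFun hμ k
  have hμ0 : μ = 0 := by
    simp only [Pi.smul_apply, spike, smul_eq_mul, Pi.sub_apply, Pi.single_apply, hik, hil,
      if_false, sub_zero] at hi
    split_ifs at hi <;> linarith
  simp [hμ0, hkl] at hk

lemma eq_smul_spike {a b c d : Fin 4} (hab : a ≠ b) (hac : a ≠ c) (had : a ≠ d) (hbc : b ≠ c)
    (hbd : b ≠ d) (hcd : c ≠ d) {w : Fin 4 → ℝ} (hw : w ∈ sumZero 4) (hwab : w a = w b)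
    (hwac : w a = w c) : w = w a • spike d := by
  rw [mem_sumZero, sum_fin_four_of_distinct hab hac had hbc hbd hcd] at hw
  ext m
  rcases fin_four_cover a b c d m hab hac had hbc hbd hcd with rfl | rfl | rfl | rfl
  · simp [spike, had]
  · simp [spike, hbd, hwab]
  · simp [spike, hcd, hwac]
  · simp [spike]
    linarith

lemma map_sumZero_le_span_spike {M : Matrix (Fin 4) (Fin 4) ℝ}
    (hM : M ∈ doublyStochastic ℝ (Fin 4)) {a b c d : Fin 4} (hab : a ≠ b) (hac : a ≠ c)
    (had : a ≠ d) (hbc : b ≠ c) (hbd : b ≠ d) (hcd : c ≠ d) (hMab : M a = M b) (hMac : M a = M c) :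
    (sumZero 4).map M.mulVecLin ≤ Submodule.span ℝ {spike d} := by
  rintro _ ⟨u, hu, rfl⟩
  refine Submodule.mem_span_singleton.2 ⟨(M *ᵥ u) a, ?_⟩
  exact (eq_smul_spike hab hac had hbc hbd hcd (mulVec_mem_sumZero hM hu)
    (congrArg (· ⬝ᵥ u) hMab) (congrArg (· ⬝ᵥ u) hMac)).symm

lemma not_isReachable_of_le_span_spike {W : Submodule ℝ (Fin 4 → ℝ)} (hW : W ≠ ⊥) {d : Fin 4}
    (hWd : W ≤ Submodule.span ℝ {spike d}) : ¬ IsReachable W := by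
  rintro (rfl | ⟨i, j, hij, rfl⟩ | ⟨x, hx, hWx⟩)
  · refine single_sub_single_not_mem_span_spike (i := 2) (k := 0) (l := 1) (by decide) (by decide)
      (by decide) d (hWd ?_)
    simp [mem_sumZero]
  · obtain ⟨k, l, hik, hil, hjk, hjl, hkl⟩ := exists_two_others i j hij
    refine single_sub_single_not_mem_span_spike hkl hik hil d (hWd (mem_sumZeroEq.2 ⟨?_, ?_⟩))
    · simp [mem_sumZero]
    · simp [hik, hil, hjk, hjl]
  · obtain ⟨w, hwW, hw0⟩ := W.ne_bot_iff.1 hW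
    obtain ⟨r, rfl⟩ := Submodule.mem_span_singleton.1 (hWx hwW)
    obtain ⟨μ, hμ⟩ := Submodule.mem_span_singleton.1 (hWd hwW)
    have hr : r ≠ 0 := by rintro rfl; simp at hw0
    have hxd : x = (μ / r) • spike d := by
      rw [div_eq_inv_mul, mul_smul, hμ, smul_smul, inv_mul_cancel₀ hr, one_smul]
    have := hx.eq_zero_of_eq_smul_spike hxd
    simp_all

end Four

theorem stmt_7_general (P : ℕ → Matrix (Fin 4) (Fin 4) ℝ)
    (hmem : ∀ k, ∃ i j, i ≠ j ∧ P k = gossipM 4 i j) :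
    ¬ ∃ h : ℕ, 1 ≤ h ∧
      (Set.range fun i => ((List.range h).map P).reverse.prod i).ncard = 2 ∧
      ∃ a b c : Fin 4, a ≠ b ∧ a ≠ c ∧ b ≠ c ∧
        ((List.range h).map P).reverse.prod a = ((List.range h).map P).reverse.prod b ∧
        ((List.range h).map P).reverse.prod a = ((List.range h).map P).reverse.prod c := by
  rintro ⟨h, -, hcard, a, b, c, hab, hac, hbc, hrab, hrac⟩
  set L := ((List.range h).map P).reverse
  have hL : ∀ M ∈ L, ∃ i j, i ≠ j ∧ M = gossipM 4 i j := by
    intro M hM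
    obtain ⟨k, -, rfl⟩ := List.mem_map.1 (List.mem_reverse.1 hM)
    exact hmem k
  have hΨ : L.prod ∈ doublyStochastic ℝ (Fin 4) := Submonoid.list_prod_mem _ fun M hM => by
    obtain ⟨i, j, -, rfl⟩ := hL M hM
    exact gossipM_mem_doublyStochastic i j
  obtain ⟨d, had, hbd, hcd⟩ := exists_fourth a b c hab hac hbc
  have hrad : L.prod a ≠ L.prod d := by
    intro hrad
    have hconst : (fun m => L.prod m) = fun _ => L.prod a := funext fun m => by
      rcases fin_four_cover a b c d m hab hac had hbc hbd hcd with rfl | rfl | rfl | rfl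
      exacts [rfl, hrab.symm, hrac.symm, hrad.symm]
    rw [hconst, Set.range_const, Set.ncard_singleton] at hcard
    exact absurd hcard (by norm_num)
  exact not_isReachable_of_le_span_spike (map_sumZero_ne_bot hΨ hrad)
    (map_sumZero_le_span_spike hΨ hab hac had hbc hbd hcd hrab hrac) (isReachable_map_prod L hL)

theorem stmt_7 (P : ℕ → Matrix (Fin 4) (Fin 4) ℝ)
    (hmem : ∀ k, ∃ i j, i ≠ j ∧ P k = gossipM 4 i j)
    (hconsec : ∀ k, P k ≠ P (k + 1)) :
    ¬ ∃ h : ℕ, 1 ≤ h ∧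
      (Set.range fun i => ((List.range h).map P).reverse.prod i).ncard = 2 ∧
      ∃ a b c : Fin 4, a ≠ b ∧ a ≠ c ∧ b ≠ c ∧
        ((List.range h).map P).reverse.prod a = ((List.range h).map P).reverse.prod b ∧
        ((List.range h).map P).reverse.prod a = ((List.range h).map P).reverse.prod c :=
  stmt_7_general P hmem
end

section
/- Let n = 2^m + r with integers m ≥ 0 and 0 ≤ r < 2^m. Then the minimum, over all integers t ≥ 1 and all P_0, …, P_{t−1} ∈ 𝓜_n^♮ with rank(P_{t−1}⋯P_0) = 1, of the number of node updates Σ_{k=0}^{t−1} ‖I_n − P_k‖_1 equals m·n + 2r. -/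
open Matrix

/-- The asymmetric gossip matrix `I - e_i (e_i - e_j)^T / 2`. -/
noncomputable def gossipA (n : ℕ) (i j : Fin n) : Matrix (Fin n) (Fin n) ℝ :=
  1 - (1 / 2 : ℝ) • vecMulVec (Pi.single i 1) (Pi.single i 1 - Pi.single j 1)

/-- Membership in the set `𝓜_n^♮` of (symmetric or asymmetric) gossip matrices. -/
def memAsym (n : ℕ) (P : Matrix (Fin n) (Fin n) ℝ) : Prop :=
  ∃ i j, P = gossipM n i j ∨ P = gossipA n i j


/-!
Every gossip matrix is row stochastic, and each of its rows is either the corresponding row of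
the identity (no update of that node) or has diagonal entry `1/2` (one update). Hence, if node
`i` is updated `u i` times, the product has diagonal entry at least `2 ^ (-u i)` at `i`. A row
stochastic matrix of rank one has all rows equal, so its trace is `1`, and therefore
`∑ i, 2 ^ (-u i) ≤ 1`. For integers `u`, `u ≥ m + 2 - 2 ^ (m + 1) * 2 ^ (-u)`, and summing
over the `n = 2 ^ m + r` nodes gives `∑ i, u i ≥ (m + 2) n - 2 ^ (m + 1) = m n + 2 r`.

Conversely, split the nodes into two halves whose sizes differ by at most one, equalize each half
recursively, and merge them by symmetric gossips between paired nodes, preceded by one asymmetric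
gossip that moves the unpaired node to the common average. Merging updates every node exactly
once, and unfolding the recursion gives exactly `m n + 2 r` updates.
-/

section RowStochastic

variable {ι R : Type*} [Fintype ι]

lemma prod_map_diag_le_diag_prod [DecidableEq ι] [Semiring R] [PartialOrder R] [IsOrderedRing R]
    {L : List (Matrix ι ι R)} (hL : ∀ P ∈ L, P ∈ rowStochastic R ι) (i : ι) :
    (L.map fun P => P i i).prod ≤ L.prod i i := by
  induction L with
  | nil => simp
  | cons P L ih =>
    have hP := hL P List.mem_cons_self
    have hL' : ∀ Q ∈ L, Q ∈ rowStochastic R ι := fun Q hQ => hL Q (List.mem_cons_of_mem _ hQ)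
    have hprod := Submonoid.list_prod_mem _ hL'
    rw [List.map_cons, List.prod_cons, List.prod_cons, Matrix.mul_apply]
    calc P i i * (L.map fun P => P i i).prod ≤ P i i * L.prod i i :=
          mul_le_mul_of_nonneg_left (ih hL') (nonneg_of_mem_rowStochastic hP)
      _ ≤ ∑ k, P i k * L.prod k i :=
          Finset.single_le_sum (f := fun k => P i k * L.prod k i)
            (fun k _ => mul_nonneg (nonneg_of_mem_rowStochastic hP)
              (nonneg_of_mem_rowStochastic hprod)) (Finset.mem_univ i)

lemma trace_eq_one_of_rank_eq_one [Field R] [Nonempty ι] {Q : Matrix ι ι R} (hQ : Q.rank = 1)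
    (hs : Q *ᵥ 1 = 1) : Q.trace = 1 := by
  rw [Matrix.rank_eq_finrank_span_row] at hQ
  obtain ⟨v, -, hv⟩ := finrank_eq_one_iff'.mp hQ
  have hrow (k : ι) : ∃ c : R, c • (v : ι → R) = Q k := by
    obtain ⟨c, hc⟩ := hv ⟨Q k, Submodule.subset_span (Set.mem_range_self k)⟩
    exact ⟨c, congrArg Subtype.val hc⟩
  choose c hc using hrow
  have hsum (k : ι) : c k * ∑ j, (v : ι → R) j = 1 := by
    have := congrFun hs k
    simp only [mulVec, dotProduct, Pi.one_apply, mul_one] at this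
    rw [← this, ← hc k, Finset.mul_sum]
    rfl
  obtain ⟨k₀⟩ := ‹Nonempty ι›
  have hs0 : ∑ j, (v : ι → R) j ≠ 0 := right_ne_zero_of_mul_eq_one (hsum k₀)
  have hc' (k : ι) : c k = (∑ j, (v : ι → R) j)⁻¹ := eq_inv_of_mul_eq_one_left (hsum k)
  calc Q.trace = ∑ k, c k * (v : ι → R) k := by
        simp only [Matrix.trace, Matrix.diag, ← hc]
        rfl
    _ = 1 := by simp only [hc', ← Finset.mul_sum, inv_mul_cancel₀ hs0]

lemma rank_eq_one_of_forall_row_eq {m : Type*} [Finite m] [Nonempty m] [Field R]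
    {Q : Matrix m ι R} {v : ι → R} (hv : v ≠ 0) (hQ : ∀ i, Q i = v) : Q.rank = 1 := by
  rw [Matrix.rank_eq_finrank_span_row, show Set.range Q.row = {v} by
    rw [show Q.row = fun _ => v from funext hQ, Set.range_const], finrank_span_singleton hv]

end RowStochastic

lemma add_two_sub_two_pow_mul_half_pow_le (m u : ℕ) :
    (m : ℝ) + 2 - 2 ^ (m + 1) * (1 / 2) ^ u ≤ u := by
  rcases le_or_gt u (m + 1) with h | h
  · obtain ⟨k, hk⟩ := Nat.exists_eq_add_of_le h
    have hpow : (2 : ℝ) ^ (m + 1) * (1 / 2) ^ u = 2 ^ k := by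
      rw [hk, pow_add, mul_right_comm, ← mul_pow]
      norm_num
    have hk1 : (k : ℝ) + 1 ≤ 2 ^ k := by exact_mod_cast Nat.lt_two_pow_self
    have hcast : (m : ℝ) + 1 = u + k := by exact_mod_cast hk
    linarith
  · have : (m : ℝ) + 2 ≤ u := by exact_mod_cast h
    have : (0 : ℝ) ≤ 2 ^ (m + 1) * (1 / 2) ^ u := by positivity
    linarith

lemma mul_card_sub_two_pow_le_sum {ι : Type*} [Fintype ι] (u : ι → ℕ)
    (hu : ∑ i, (1 / 2 : ℝ) ^ u i ≤ 1) (m : ℕ) :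
    ((m : ℝ) + 2) * Fintype.card ι - 2 ^ (m + 1) ≤ ∑ i, (u i : ℝ) :=
  calc ((m : ℝ) + 2) * Fintype.card ι - 2 ^ (m + 1)
      ≤ ((m : ℝ) + 2) * Fintype.card ι - 2 ^ (m + 1) * ∑ i, (1 / 2 : ℝ) ^ u i := by
        gcongr
        exact mul_le_of_le_one_right (by positivity) hu
    _ = ∑ i, ((m : ℝ) + 2 - 2 ^ (m + 1) * (1 / 2) ^ u i) := by
        rw [Finset.sum_sub_distrib, ← Finset.mul_sum, Finset.sum_const, Finset.card_univ,
          nsmul_eq_mul, mul_comm]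
    _ ≤ ∑ i, (u i : ℝ) :=
        Finset.sum_le_sum fun i _ => add_two_sub_two_pow_mul_half_pow_le m (u i)

section GossipMatrices

variable {n : ℕ}

lemma vecMulVec_single_sub_single_mul_apply (p q : Fin n) (w : Fin n → ℝ)
    (X : Matrix (Fin n) (Fin n) ℝ) (i j : Fin n) :
    (vecMulVec w (Pi.single p 1 - Pi.single q 1) * X : Matrix (Fin n) (Fin n) ℝ) i j =
      w i * (X p j - X q j) := by
  simp [Matrix.mul_apply, vecMulVec_apply, Pi.single_apply, sub_mul, Finset.sum_sub_distrib,
    mul_sub]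

lemma gossipM_mul_apply (p q : Fin n) (X : Matrix (Fin n) (Fin n) ℝ) (i j : Fin n) :
    (gossipM n p q * X) i j = if i = p ∨ i = q then (X p j + X q j) / 2 else X i j := by
  rw [gossipM, Matrix.sub_mul, Matrix.one_mul, Matrix.smul_mul, Matrix.sub_apply,
    Matrix.smul_apply, vecMulVec_single_sub_single_mul_apply]
  by_cases hpq : p = q
  · subst hpq
    split_ifs with h
    · rcases h with rfl | rfl <;> simp
    · simp
  · rcases eq_or_ne i p with rfl | hip
    · simp [hpq]; ring
    rcases eq_or_ne i q with rfl | hiq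
    · simp [hip]; ring
    · simp [hip, hiq]

lemma gossipA_mul_apply (p q : Fin n) (X : Matrix (Fin n) (Fin n) ℝ) (i j : Fin n) :
    (gossipA n p q * X) i j = if i = p then (X p j + X q j) / 2 else X i j := by
  rw [gossipA, Matrix.sub_mul, Matrix.one_mul, Matrix.smul_mul, Matrix.sub_apply,
    Matrix.smul_apply, vecMulVec_single_sub_single_mul_apply]
  rcases eq_or_ne i p with rfl | hip
  · simp; ring
  · simp [hip]

lemma gossipM_mul_row (p q : Fin n) (X : Matrix (Fin n) (Fin n) ℝ) (i : Fin n) :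
    (gossipM n p q * X) i = if i = p ∨ i = q then (1 / 2 : ℝ) • (X p + X q) else X i := by
  ext j
  rw [gossipM_mul_apply]
  split_ifs <;> simp [div_eq_inv_mul]

lemma gossipA_mul_row (p q : Fin n) (X : Matrix (Fin n) (Fin n) ℝ) (i : Fin n) :
    (gossipA n p q * X) i = if i = p then (1 / 2 : ℝ) • (X p + X q) else X i := by
  ext j
  rw [gossipA_mul_apply]
  split_ifs <;> simp [div_eq_inv_mul]

lemma gossipM_apply (p q i j : Fin n) :
    gossipM n p q i j =
      if i = p ∨ i = q then ((1 : Matrix _ _ ℝ) p j + (1 : Matrix _ _ ℝ) q j) / 2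
      else (1 : Matrix _ _ ℝ) i j := by
  rw [← gossipM_mul_apply, Matrix.mul_one]

lemma gossipA_apply (p q i j : Fin n) :
    gossipA n p q i j =
      if i = p then ((1 : Matrix _ _ ℝ) p j + (1 : Matrix _ _ ℝ) q j) / 2
      else (1 : Matrix _ _ ℝ) i j := by
  rw [← gossipA_mul_apply, Matrix.mul_one]

lemma gossipM_self (p : Fin n) : gossipM n p p = 1 := by
  ext i j
  rw [gossipM_apply]
  split_ifs with h
  · rcases h with rfl | rfl <;> ring
  · rfl

lemma gossipA_self (p : Fin n) : gossipA n p p = 1 := by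
  ext i j
  rw [gossipA_apply]
  split_ifs with h
  · subst h; ring
  · rfl

lemma gossipM_apply_self {p q : Fin n} (hpq : p ≠ q) (i : Fin n) :
    gossipM n p q i i = if i = p ∨ i = q then 1 / 2 else 1 := by
  rw [gossipM_apply]
  split_ifs with h
  · rcases h with rfl | rfl <;> simp [hpq, hpq.symm]
  · simp

lemma gossipA_apply_self {p q : Fin n} (hpq : p ≠ q) (i : Fin n) :
    gossipA n p q i i = if i = p then 1 / 2 else 1 := by
  rw [gossipA_apply]
  split_ifs with h
  · subst h; simp [hpq.symm]
  · simp

lemma gossipM_mem_rowStochastic (p q : Fin n) : gossipM n p q ∈ rowStochastic ℝ (Fin n) := by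
  rw [mem_rowStochastic_iff_sum]
  refine ⟨fun i j => ?_, fun i => ?_⟩
  · rw [gossipM_apply]
    split_ifs <;> simp [Matrix.one_apply] <;> split_ifs <;> norm_num
  · simp_rw [gossipM_apply]
    split_ifs <;> simp [Matrix.one_apply, Finset.sum_add_distrib, ← Finset.sum_div]

lemma gossipA_mem_rowStochastic (p q : Fin n) : gossipA n p q ∈ rowStochastic ℝ (Fin n) := by
  rw [mem_rowStochastic_iff_sum]
  refine ⟨fun i j => ?_, fun i => ?_⟩
  · rw [gossipA_apply]
    split_ifs <;> simp [Matrix.one_apply] <;> split_ifs <;> norm_num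
  · simp_rw [gossipA_apply]
    split_ifs <;> simp [Matrix.one_apply, Finset.sum_add_distrib, ← Finset.sum_div]

lemma memAsym.mem_rowStochastic {P : Matrix (Fin n) (Fin n) ℝ} (hP : memAsym n P) :
    P ∈ rowStochastic ℝ (Fin n) := by
  obtain ⟨p, q, rfl | rfl⟩ := hP
  exacts [gossipM_mem_rowStochastic p q, gossipA_mem_rowStochastic p q]

/-- Row `i` of `‖I - P‖₁`: the number of updates of node `i` performed by `P`. -/
def rowUpdates (P : Matrix (Fin n) (Fin n) ℝ) (i : Fin n) : ℝ := ∑ j, |(1 - P) i j|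

def nodeUpdates (P : Matrix (Fin n) (Fin n) ℝ) : ℝ := ∑ i, rowUpdates P i

lemma rowUpdates_one (i : Fin n) : rowUpdates (1 : Matrix (Fin n) (Fin n) ℝ) i = 0 := by
  simp [rowUpdates]

lemma abs_sub_add_div_two (a b : ℝ) : |a - (a + b) / 2| = |a - b| / 2 := by
  rw [show a - (a + b) / 2 = (a - b) / 2 by ring, abs_div, abs_two]

lemma sum_abs_one_sub_one {p q : Fin n} (hpq : p ≠ q) :
    ∑ j, |(1 : Matrix (Fin n) (Fin n) ℝ) p j - (1 : Matrix _ _ ℝ) q j| = 2 := by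
  have h (j : Fin n) : |(1 : Matrix (Fin n) (Fin n) ℝ) p j - (1 : Matrix _ _ ℝ) q j| =
      (if p = j then 1 else 0) + (if q = j then 1 else 0) := by
    rw [Matrix.one_apply, Matrix.one_apply]
    split_ifs <;> simp_all
  simp only [h, Finset.sum_add_distrib, Finset.sum_ite_eq, Finset.mem_univ, if_true]
  norm_num

lemma rowUpdates_gossipM {p q : Fin n} (hpq : p ≠ q) (i : Fin n) :
    rowUpdates (gossipM n p q) i = if i = p ∨ i = q then 1 else 0 := by
  simp only [rowUpdates, Matrix.sub_apply, gossipM_apply]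
  split_ifs with h
  · have e (a b : ℝ) : |b - (a + b) / 2| = |a - b| / 2 := by
      rw [add_comm, abs_sub_add_div_two, abs_sub_comm]
    rcases h with rfl | rfl <;>
      simp only [abs_sub_add_div_two, e, ← Finset.sum_div, sum_abs_one_sub_one hpq] <;> norm_num
  · simp

lemma rowUpdates_gossipA {p q : Fin n} (hpq : p ≠ q) (i : Fin n) :
    rowUpdates (gossipA n p q) i = if i = p then 1 else 0 := by
  simp only [rowUpdates, Matrix.sub_apply, gossipA_apply]
  split_ifs with h
  · subst h
    simp only [abs_sub_add_div_two, ← Finset.sum_div, sum_abs_one_sub_one hpq]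
    norm_num
  · simp

lemma nodeUpdates_gossipM {p q : Fin n} (hpq : p ≠ q) : nodeUpdates (gossipM n p q) = 2 := by
  simp [nodeUpdates, rowUpdates_gossipM hpq, Finset.filter_or, Finset.filter_eq',
    Finset.card_pair hpq]

lemma nodeUpdates_gossipA {p q : Fin n} (hpq : p ≠ q) : nodeUpdates (gossipA n p q) = 1 := by
  simp [nodeUpdates, rowUpdates_gossipA hpq]

lemma memAsym.exists_rowUpdates_eq {P : Matrix (Fin n) (Fin n) ℝ} (hP : memAsym n P)
    (i : Fin n) : ∃ ν : ℕ, rowUpdates P i = ν ∧ P i i = (1 / 2) ^ ν := by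
  obtain ⟨p, q, rfl | rfl⟩ := hP <;> rcases eq_or_ne p q with rfl | hpq
  · exact ⟨0, by simp [gossipM_self, rowUpdates_one]⟩
  · rw [rowUpdates_gossipM hpq, gossipM_apply_self hpq]
    split_ifs
    exacts [⟨1, by norm_num⟩, ⟨0, by norm_num⟩]
  · exact ⟨0, by simp [gossipA_self, rowUpdates_one]⟩
  · rw [rowUpdates_gossipA hpq, gossipA_apply_self hpq]
    split_ifs
    exacts [⟨1, by norm_num⟩, ⟨0, by norm_num⟩]

end GossipMatrices

section LowerBound

variable {n : ℕ}

theorem exists_rowUpdates_eq_of_rank_eq_one {t : ℕ} (P : Fin t → Matrix (Fin n) (Fin n) ℝ)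
    (hP : ∀ k, memAsym n (P k)) (hrank : ((List.ofFn P).reverse.prod).rank = 1) :
    ∃ u : Fin n → ℕ, (∀ i, ∑ k, rowUpdates (P k) i = u i) ∧
      ∑ i, (1 / 2 : ℝ) ^ u i ≤ 1 := by
  have hn : 1 ≤ n := hrank ▸ Matrix.rank_le_width _
  have : Nonempty (Fin n) := ⟨⟨0, hn⟩⟩
  set L := (List.ofFn P).reverse
  have hL : ∀ Q ∈ L, Q ∈ rowStochastic ℝ (Fin n) := by
    simp only [L, List.mem_reverse, List.mem_ofFn]
    rintro _ ⟨k, rfl⟩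
    exact (hP k).mem_rowStochastic
  choose ν hνrow hνdiag using fun k i => (hP k).exists_rowUpdates_eq i
  refine ⟨fun i => ∑ k, ν k i, fun i => by simp [hνrow], ?_⟩
  calc ∑ i, (1 / 2 : ℝ) ^ (∑ k, ν k i) = ∑ i, (L.map fun Q => Q i i).prod := by
        simp only [L, List.map_reverse, List.prod_reverse, List.map_ofFn, List.prod_ofFn,
          Function.comp_apply, hνdiag, Finset.prod_pow_eq_pow_sum]
    _ ≤ ∑ i, L.prod i i := Finset.sum_le_sum fun i _ => prod_map_diag_le_diag_prod hL i
    _ = 1 := trace_eq_one_of_rank_eq_one hrank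
        (mem_rowStochastic.1 (Submonoid.list_prod_mem _ hL)).2

end LowerBound

section Construction

variable {n : ℕ}

lemma memAsym_of_mem_zipWith {A B : List (Fin n)} {P : Matrix (Fin n) (Fin n) ℝ}
    (hP : P ∈ List.zipWith (gossipM n) A B) : memAsym n P := by
  rw [← List.map_uncurry_zip_eq_zipWith] at hP
  obtain ⟨⟨p, q⟩, -, rfl⟩ := List.mem_map.mp hP
  exact ⟨p, q, Or.inl rfl⟩

lemma sum_map_nodeUpdates_zipWith {A B : List (Fin n)} (hnd : (A ++ B).Nodup)
    (hlen : A.length = B.length) :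
    ((List.zipWith (gossipM n) A B).map nodeUpdates).sum = 2 * A.length := by
  induction A generalizing B with
  | nil => simp
  | cons p A ih =>
    obtain ⟨q, B, rfl⟩ := List.exists_cons_of_length_eq_add_one hlen.symm
    rw [List.cons_append, List.nodup_cons, List.nodup_middle, List.nodup_cons] at hnd
    obtain ⟨hp, -, hnd⟩ := hnd
    have hpq : p ≠ q := fun h => hp (by simp [h])
    rw [List.zipWith_cons_cons, List.map_cons, List.sum_cons, ih hnd (by simpa using hlen),
      nodeUpdates_gossipM hpq, List.length_cons]
    push_cast
    ring

lemma zipWith_gossipM_mul_row {A B : List (Fin n)} (hnd : (A ++ B).Nodup)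
    (hlen : A.length = B.length) {X : Matrix (Fin n) (Fin n) ℝ} {u v : Fin n → ℝ}
    (hA : ∀ i ∈ A, X i = u) (hB : ∀ i ∈ B, X i = v) (i : Fin n) :
    ((List.zipWith (gossipM n) A B).reverse.prod * X) i =
      if i ∈ A ++ B then (1 / 2 : ℝ) • (u + v) else X i := by
  induction A generalizing B X with
  | nil =>
    obtain rfl : B = [] := List.eq_nil_of_length_eq_zero hlen.symm
    simp
  | cons p A ih =>
    obtain ⟨q, B, rfl⟩ := List.exists_cons_of_length_eq_add_one hlen.symm
    rw [List.cons_append, List.nodup_cons, List.nodup_middle, List.nodup_cons] at hnd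
    obtain ⟨hp, hq, hnd⟩ := hnd
    simp only [List.mem_append, List.mem_cons, not_or] at hp hq
    have hA' : ∀ i ∈ A, (gossipM n p q * X) i = u := fun i hi => by
      rw [gossipM_mul_row, if_neg (by rintro (rfl | rfl) <;> tauto),
        hA i (List.mem_cons_of_mem _ hi)]
    have hB' : ∀ i ∈ B, (gossipM n p q * X) i = v := fun i hi => by
      rw [gossipM_mul_row, if_neg (by rintro (rfl | rfl) <;> tauto),
        hB i (List.mem_cons_of_mem _ hi)]
    rw [List.zipWith_cons_cons, List.reverse_cons, List.prod_append, List.prod_singleton,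
      Matrix.mul_assoc, ih hnd (by simpa using hlen) hA' hB', gossipM_mul_row,
      hA p List.mem_cons_self, hB q List.mem_cons_self]
    simp only [List.mem_append, List.mem_cons]
    split_ifs <;> first | rfl | tauto

/-- `L` lists gossip steps in the order in which they are performed. -/
def Equalizes (L : List (Matrix (Fin n) (Fin n) ℝ)) (s : List (Fin n)) : Prop :=
  ∀ X : Matrix (Fin n) (Fin n) ℝ,
    (∀ i ∉ s, (L.reverse.prod * X) i = X i) ∧ ∃ v, ∀ i ∈ s, (L.reverse.prod * X) i = v

lemma equalizes_nil_singleton (p : Fin n) : Equalizes [] [p] := fun X =>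
  ⟨fun i _ => by simp, X p, fun i hi => by simp [List.mem_singleton.mp hi]⟩

lemma Equalizes.append {LA LB : List (Matrix (Fin n) (Fin n) ℝ)} {A B : List (Fin n)}
    (hA : Equalizes LA A) (hB : Equalizes LB B) (hAB : A.Disjoint B)
    (X : Matrix (Fin n) (Fin n) ℝ) :
    ∃ u v, (∀ i ∈ A, ((LA ++ LB).reverse.prod * X) i = u) ∧
      (∀ i ∈ B, ((LA ++ LB).reverse.prod * X) i = v) ∧
      ∀ i ∉ A ++ B, ((LA ++ LB).reverse.prod * X) i = X i := by
  obtain ⟨hAout, u, hAin⟩ := hA X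
  obtain ⟨hBout, v, hBin⟩ := hB (LA.reverse.prod * X)
  simp only [List.reverse_append, List.prod_append, Matrix.mul_assoc]
  refine ⟨u, v, fun i hi => ?_, hBin, fun i hi => ?_⟩
  · rw [hBout i (hAB hi), hAin i hi]
  · rw [List.mem_append, not_or] at hi
    rw [hBout i hi.2, hAout i hi.1]

lemma Equalizes.append_zipWith {LA LB : List (Matrix (Fin n) (Fin n) ℝ)} {A B : List (Fin n)}
    (hA : Equalizes LA A) (hB : Equalizes LB B) (hnd : (A ++ B).Nodup)
    (hlen : A.length = B.length) :
    Equalizes (LA ++ LB ++ List.zipWith (gossipM n) A B) (A ++ B) := fun X => by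
  obtain ⟨u, v, hu, hv, hout⟩ := hA.append hB (List.disjoint_of_nodup_append hnd) X
  rw [List.reverse_append, List.prod_append, Matrix.mul_assoc]
  refine ⟨fun i hi => ?_, (1 / 2 : ℝ) • (u + v), fun i hi => ?_⟩
  · rw [zipWith_gossipM_mul_row hnd hlen hu hv, if_neg hi, hout i hi]
  · rw [zipWith_gossipM_mul_row hnd hlen hu hv, if_pos hi]

lemma Equalizes.append_gossipA_zipWith {LA LB : List (Matrix (Fin n) (Fin n) ℝ)} {p q : Fin n}
    {A B : List (Fin n)} (hA : Equalizes LA (p :: A)) (hB : Equalizes LB (q :: B))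
    (hnd : (p :: A ++ q :: B).Nodup) (hlen : A.length = (q :: B).length) :
    Equalizes (LA ++ LB ++ gossipA n p q :: List.zipWith (gossipM n) A (q :: B))
      (p :: A ++ q :: B) := fun X => by
  obtain ⟨u, v, hu, hv, hout⟩ := hA.append hB (List.disjoint_of_nodup_append hnd) X
  rw [List.cons_append, List.nodup_cons] at hnd
  obtain ⟨hp, hnd⟩ := hnd
  set Y := (LA ++ LB).reverse.prod * X
  have hp' : ∀ i ∈ A ++ q :: B, i ≠ p := fun i hi h => hp (h ▸ hi)
  have hu' : ∀ i ∈ A, (gossipA n p q * Y) i = u := fun i hi => by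
    rw [gossipA_mul_row, if_neg (hp' i (List.mem_append_left _ hi)),
      hu i (List.mem_cons_of_mem _ hi)]
  have hv' : ∀ i ∈ q :: B, (gossipA n p q * Y) i = v := fun i hi => by
    rw [gossipA_mul_row, if_neg (hp' i (List.mem_append_right _ hi)), hv i hi]
  rw [List.reverse_append, List.prod_append, Matrix.mul_assoc, List.reverse_cons,
    List.prod_append, List.prod_singleton, Matrix.mul_assoc]
  refine ⟨fun i hi => ?_, (1 / 2 : ℝ) • (u + v), fun i hi => ?_⟩
  · rw [List.cons_append, List.mem_cons, not_or] at hi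
    rw [zipWith_gossipM_mul_row hnd hlen hu' hv', if_neg hi.2, gossipA_mul_row,
      if_neg hi.1, hout i (by simp [hi])]
  · rw [zipWith_gossipM_mul_row hnd hlen hu' hv']
    split_ifs with h
    · rfl
    · rw [gossipA_mul_row, if_pos (by simpa [h] using hi), hu p List.mem_cons_self,
        hv q List.mem_cons_self]

lemma Equalizes.exists_merge {LA LB : List (Matrix (Fin n) (Fin n) ℝ)} {A B : List (Fin n)}
    (hA : Equalizes LA A) (hB : Equalizes LB B) (hnd : (A ++ B).Nodup) (hB0 : B ≠ [])
    (hlen : B.length ≤ A.length) (hlen' : A.length ≤ B.length + 1) :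
    ∃ M, (∀ P ∈ M, memAsym n P) ∧
      (M.map nodeUpdates).sum = ((A.length + B.length : ℕ) : ℝ) ∧
      Equalizes (LA ++ LB ++ M) (A ++ B) := by
  rcases hlen.eq_or_lt with heq | hlt
  · refine ⟨List.zipWith (gossipM n) A B, fun P => memAsym_of_mem_zipWith, ?_,
      hA.append_zipWith hB hnd heq.symm⟩
    rw [sum_map_nodeUpdates_zipWith hnd heq.symm, ← heq]
    push_cast
    ring
  · obtain ⟨p, A, rfl⟩ :=
      List.exists_cons_of_length_eq_add_one (by omega : A.length = B.length + 1)
    obtain ⟨q, B, rfl⟩ := List.exists_cons_of_ne_nil hB0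
    have hlenA : A.length = (q :: B).length := by simp at hlt hlen' ⊢; omega
    refine ⟨gossipA n p q :: List.zipWith (gossipM n) A (q :: B), ?_, ?_,
      hA.append_gossipA_zipWith hB hnd hlenA⟩
    · intro P hP
      rcases List.mem_cons.mp hP with rfl | hP
      exacts [⟨p, q, Or.inr rfl⟩, memAsym_of_mem_zipWith hP]
    · rw [List.cons_append, List.nodup_cons] at hnd
      have hpq : p ≠ q := fun h => hnd.1 (by simp [h])
      rw [List.map_cons, List.sum_cons, sum_map_nodeUpdates_zipWith hnd.2 hlenA,
        nodeUpdates_gossipA hpq]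
      simp only [List.length_cons, hlenA]
      push_cast
      ring

theorem exists_equalizes (m : ℕ) :
    ∀ r ≤ 2 ^ m, ∀ l : List (Fin n), l.Nodup → l.length = 2 ^ m + r →
      ∃ L, (∀ P ∈ L, memAsym n P) ∧
        (L.map nodeUpdates).sum = ((m * (2 ^ m + r) + 2 * r : ℕ) : ℝ) ∧ Equalizes L l := by
  induction m with
  | zero =>
    intro r hr l hl hlen
    obtain rfl | rfl : r = 0 ∨ r = 1 := by omega
    · obtain ⟨p, rfl⟩ := List.length_eq_one_iff.mp hlen
      exact ⟨[], by simp, by simp, equalizes_nil_singleton p⟩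
    · obtain ⟨p, q, rfl⟩ := List.length_eq_two.mp hlen
      obtain ⟨M, hM, hcost, heq⟩ := (equalizes_nil_singleton p).exists_merge
        (equalizes_nil_singleton q) hl (List.cons_ne_nil _ _) le_rfl (by simp)
      exact ⟨M, hM, by simpa using hcost, by simpa using heq⟩
  | succ m ih =>
    intro r hr l hl hlen
    have hpow : 2 ^ (m + 1) = 2 * 2 ^ m := pow_succ' 2 m
    have hpos : 0 < 2 ^ m := Nat.two_pow_pos m
    set x := r - r / 2
    set y := r / 2
    obtain ⟨LA, hLA, hcostA, hA⟩ := ih x (by omega) (l.take (2 ^ m + x))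
      (hl.sublist (List.take_sublist _ _)) (by simp; omega)
    obtain ⟨LB, hLB, hcostB, hB⟩ := ih y (by omega) (l.drop (2 ^ m + x))
      (hl.sublist (List.drop_sublist _ _)) (by simp; omega)
    obtain ⟨M, hM, hcostM, hmerge⟩ := hA.exists_merge hB (by rwa [List.take_append_drop])
      (by simp; omega) (by simp; omega) (by simp; omega)
    rw [List.take_append_drop] at hmerge
    refine ⟨LA ++ LB ++ M, ?_, ?_, hmerge⟩
    · simp only [List.mem_append]
      rintro P ((hP | hP) | hP)
      exacts [hLA P hP, hLB P hP, hM P hP]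
    · rw [List.map_append, List.map_append, List.sum_append, List.sum_append, hcostA, hcostB,
        hcostM, List.length_take, List.length_drop, hlen,
        show min (2 ^ m + x) (2 ^ (m + 1) + r) + (2 ^ (m + 1) + r - (2 ^ m + x)) =
          2 ^ m + x + (2 ^ m + y) by omega,
        show r = x + y by omega, hpow]
      push_cast
      ring

lemma rank_prod_eq_one_of_equalizes [NeZero n] {L : List (Matrix (Fin n) (Fin n) ℝ)}
    (hL : ∀ P ∈ L, memAsym n P) (heq : Equalizes L (List.finRange n)) :
    L.reverse.prod.rank = 1 := by
  obtain ⟨-, v, hv⟩ := heq 1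
  simp only [Matrix.mul_one] at hv
  have hstoch : L.reverse.prod ∈ rowStochastic ℝ (Fin n) := Submonoid.list_prod_mem _
    fun P hP => (hL P (List.mem_reverse.mp hP)).mem_rowStochastic
  refine rank_eq_one_of_forall_row_eq (v := v) ?_ fun i => hv i (List.mem_finRange i)
  rintro rfl
  simpa [hv 0 (List.mem_finRange _)] using sum_row_of_mem_rowStochastic hstoch 0

lemma exists_ofFn_of_equalizes [NeZero n] {L : List (Matrix (Fin n) (Fin n) ℝ)}
    (hL : ∀ P ∈ L, memAsym n P) (heq : Equalizes L (List.finRange n)) :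
    ∃ t : ℕ, 1 ≤ t ∧ ∃ P : Fin t → Matrix (Fin n) (Fin n) ℝ,
      (∀ k, memAsym n (P k)) ∧ ((List.ofFn P).reverse.prod).rank = 1 ∧
      (L.map nodeUpdates).sum = ∑ k, ∑ i, ∑ j, |(1 - P k) i j| := by
  -- the identity `gossipM n 0 0` keeps the sequence nonempty when `n = 1`
  let L' := gossipM n 0 0 :: L
  have hL' : ∀ P ∈ L', memAsym n P := by simpa [L'] using ⟨⟨0, 0, Or.inl rfl⟩, hL⟩
  refine ⟨L'.length, by simp [L'], L'.get, fun k => hL' _ (List.get_mem _ _), ?_, ?_⟩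
  · rw [List.ofFn_get]
    simpa [L', gossipM_self] using rank_prod_eq_one_of_equalizes hL heq
  · have hid : (L'.map nodeUpdates).sum = (L.map nodeUpdates).sum := by
      simp [L', nodeUpdates, rowUpdates, gossipM_self]
    rw [← hid, ← Fin.sum_univ_fun_getElem]
    rfl

end Construction

theorem stmt_9 (m r n : ℕ) (hr : r < 2 ^ m) (hn : n = 2 ^ m + r) :
    IsLeast
      { c : ℝ | ∃ t : ℕ, 1 ≤ t ∧ ∃ P : Fin t → Matrix (Fin n) (Fin n) ℝ,
          (∀ k, memAsym n (P k)) ∧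
          ((List.ofFn P).reverse.prod).rank = 1 ∧
          c = ∑ k, ∑ i, ∑ j, |(1 - P k) i j| }
      ((m * n + 2 * r : ℕ) : ℝ) := by
  refine ⟨?_, ?_⟩
  · have : NeZero n := ⟨by simp [hn]⟩
    obtain ⟨L, hL, hcost, heq⟩ :=
      exists_equalizes m r hr.le (List.finRange n) (List.nodup_finRange n) (by simp [hn])
    rw [← hn] at hcost
    rw [← hcost]
    exact exists_ofFn_of_equalizes hL heq
  · rintro c ⟨t, -, P, hP, hrank, rfl⟩
    obtain ⟨u, hu, hkraft⟩ := exists_rowUpdates_eq_of_rank_eq_one P hP hrank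
    calc ((m * n + 2 * r : ℕ) : ℝ) = ((m : ℝ) + 2) * Fintype.card (Fin n) - 2 ^ (m + 1) := by
          subst hn
          rw [Fintype.card_fin]
          push_cast
          ring
      _ ≤ ∑ i, (u i : ℝ) := mul_card_sub_two_pow_le_sum u hkraft m
      _ = ∑ k, ∑ i, ∑ j, |(1 - P k) i j| := by
          rw [Finset.sum_comm]
          simp only [← hu, rowUpdates]
end

section
/- Let n = 2^m + r with integers m ≥ 0 and 0 ≤ r < 2^m. Let F be the set of vectors f = (f_1, …, f_n) of rational numbers with Σ_{i=1}^n f_i = 1 such that each f_i can be written as f_i = b_i/2^{c_i} with b_i an odd nonnegative integer and c_i a nonnegative integer (so each f_i is a positive dyadic rational). For f ∈ F and 1 ≤ i ≤ n, let χ_i(f) be the least integer d with f_i ≥ 1/2^d. Then min_{f ∈ F} Σ_{i=1}^n χ_i(f) = m·n + 2r. -/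
/-!
Minimality of `χ i` gives `2 ^ (-χ i) ≤ f i`, hence the Kraft-type bound `∑ 2 ^ (-χ i) ≤ 1`.
For integers `x` one has `x ≥ m + 2 - 2 ^ (m + 1) * 2 ^ (-x)`, with equality exactly at
`x = m` and `x = m + 1`; summing it gives `∑ χ i ≥ n (m + 2) - 2 ^ (m + 1) = m n + 2 r`.
Equality is attained by `2 r` entries `2 ^ (-(m + 1))` and `2 ^ m - r` entries `2 ^ (-m)`.
-/

open Finset

section

variable {K : Type*} [Field K] [LinearOrder K] [IsStrictOrderedRing K]

lemma add_one_le_two_zpow (k : ℤ) : (k : K) + 1 ≤ 2 ^ k := by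
  rcases lt_or_ge k 0 with hk | hk
  · have : (k : K) + 1 ≤ 0 := by exact_mod_cast hk
    exact this.trans (zpow_pos two_pos k).le
  · lift k to ℕ using hk
    simpa [add_comm, one_add_one_eq_two] using one_add_mul_le_pow (a := (1 : K)) (by norm_num) k

lemma add_two_sub_two_pow_mul_zpow_neg_le (m : ℕ) (x : ℤ) :
    (m : K) + 2 - 2 ^ (m + 1) * 2 ^ (-x) ≤ x := by
  have key := add_one_le_two_zpow (K := K) (m + 1 - x)
  rw [sub_eq_add_neg, zpow_add₀ two_ne_zero, ← Nat.cast_add_one, zpow_natCast] at key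
  push_cast at key
  linarith

lemma card_mul_add_two_sub_le_sum {ι : Type*} [Fintype ι] (m : ℕ) (χ : ι → ℤ)
    (hχ : ∑ i, (2 : K) ^ (-χ i) ≤ 1) :
    (Fintype.card ι : K) * (m + 2) - 2 ^ (m + 1) ≤ ∑ i, (χ i : K) := by
  calc (Fintype.card ι : K) * (m + 2) - 2 ^ (m + 1)
      ≤ (Fintype.card ι : K) * (m + 2) - 2 ^ (m + 1) * ∑ i, (2 : K) ^ (-χ i) := by
        gcongr; exact mul_le_of_le_one_right (by positivity) hχ
    _ = ∑ i, ((m : K) + 2 - 2 ^ (m + 1) * 2 ^ (-χ i)) := by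
        rw [sum_sub_distrib, mul_sum, sum_const, card_univ, nsmul_eq_mul]
    _ ≤ ∑ i, (χ i : K) := sum_le_sum fun i _ => add_two_sub_two_pow_mul_zpow_neg_le m (χ i)

lemma isLeast_setOf_one_div_two_zpow_le (c : ℤ) :
    IsLeast {d : ℤ | (1 : K) / 2 ^ d ≤ 1 / 2 ^ c} c := by
  have : {d : ℤ | (1 : K) / 2 ^ d ≤ 1 / 2 ^ c} = Set.Ici c := by
    ext d
    rw [Set.mem_ofPred_eq, one_div_le_one_div (zpow_pos two_pos _) (zpow_pos two_pos _),
      zpow_le_zpow_iff_right₀ one_lt_two, Set.mem_Ici]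
  exact this ▸ isLeast_Ici

end

lemma Fin.sum_ite_lt {M : Type*} [AddCommMonoid M] (a b : ℕ) (x y : M) :
    ∑ i : Fin (a + b), (if (i : ℕ) < a then x else y) = a • x + b • y := by
  simp [Fin.sum_univ_add]

theorem stmt_12 (m r n : ℕ) (hr : r < 2 ^ m) (hn : n = 2 ^ m + r) :
    IsLeast
      { s : ℤ | ∃ f : Fin n → ℚ,
          (∑ i, f i) = 1 ∧
          (∀ i, ∃ b c : ℕ, Odd b ∧ f i = (b : ℚ) / 2 ^ c) ∧
          ∃ χ : Fin n → ℤ,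
            (∀ i, IsLeast { d : ℤ | (1 : ℚ) / 2 ^ d ≤ f i } (χ i)) ∧
            s = ∑ i, χ i }
      ((m * n + 2 * r : ℕ) : ℤ) := by
  obtain ⟨s, hs⟩ : ∃ s, 2 ^ m = r + s := ⟨2 ^ m - r, by omega⟩
  obtain rfl : n = 2 * r + s := by omega
  have hpow : (2 : ℚ) ^ m = r + s := by exact_mod_cast hs
  constructor
  · let c : Fin (2 * r + s) → ℕ := fun i => if (i : ℕ) < 2 * r then m + 1 else m
    refine ⟨fun i => 1 / (2 : ℚ) ^ c i, ?_, fun i => ⟨1, c i, odd_one, by simp⟩,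
      fun i => c i, fun i => by simpa using isLeast_setOf_one_div_two_zpow_le (K := ℚ) (c i), ?_⟩
    · simp only [c, apply_ite (fun k : ℕ => (1 : ℚ) / 2 ^ k), Fin.sum_ite_lt, nsmul_eq_mul]
      field_simp
      rw [pow_succ, hpow]
      push_cast
      ring
    · simp only [c, Nat.cast_ite, Fin.sum_ite_lt, nsmul_eq_mul]
      push_cast
      ring
  · rintro _ ⟨f, hsum, -, χ, hχ, rfl⟩
    have hkraft : ∑ i, (2 : ℚ) ^ (-χ i) ≤ 1 :=
      hsum ▸ sum_le_sum fun i _ => by simpa [zpow_neg] using (hχ i).1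
    have hbound := card_mul_add_two_sub_le_sum m χ hkraft
    rw [Fintype.card_fin, pow_succ, hpow] at hbound
    push_cast at hbound
    rw [← Int.cast_le (R := ℚ)]
    push_cast
    linarith
end
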